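/- For every natural number n ≥ 1, ∑_{i=1}^{n} H_i·H_{n+1−i} = (n+2)(H_{n+1}² − H_{n+1}^{(2)}) − 2(n+1)(H_{n+1} − 1), where H_k is the k-th harmonic number and H_k^{(2)} is the k-th harmonic number of order 2. -/

import Mathlib

open Finset

noncomputable def H (n : ℕ) : ℝ := ∑ i ∈ Finset.Icc 1 n, (1:ℝ)/i
noncomputable def H2 (n : ℕ) : ℝ := ∑ i ∈ Finset.Icc 1 n, (1:ℝ)/(i:ℝ)^2

/-!
Since `H 0 = 0`, the sum is the convolution `∑_{a+b=n+1} H_a H_b`. Raising the first index by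
one (`H_{a+1} = H_a + 1/(a+1)`) shows that passing from `m` to `m+1` adds
`∑_{a+b=m} H_a/(b+1)`, and the same shift, together with the partial fractions
`1/((a+1)(b+1)) = (1/(a+1) + 1/(b+1))/(m+2)`, evaluates that sum as `H_{m+1}² - H_{m+1}^{(2)}`.
The closed form then follows by induction on `n`.
-/

open Finset.Nat

lemma H_zero : H 0 = 0 := by simp [H]

lemma H_succ (n : ℕ) : H (n + 1) = H n + 1 / ((n : ℝ) + 1) := by
  rw [H, H, sum_Icc_succ_top (by omega)]
  push_cast
  ring

lemma H2_succ (n : ℕ) : H2 (n + 1) = H2 n + 1 / ((n : ℝ) + 1) ^ 2 := by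
  rw [H2, H2, sum_Icc_succ_top (by omega)]
  push_cast
  ring

lemma H_eq_sum_range (n : ℕ) : H n = ∑ k ∈ range n, 1 / ((k : ℝ) + 1) := by
  induction n with
  | zero => exact H_zero
  | succ n ih => rw [H_succ, ih, sum_range_succ]

lemma sum_antidiagonal_inv_succ_mul_inv_succ (m : ℕ) :
    ∑ p ∈ antidiagonal m, 1 / (((p.1 : ℝ) + 1) * ((p.2 : ℝ) + 1))
      = 2 * H (m + 1) / ((m : ℝ) + 2) := by
  have partial_fractions : ∀ p ∈ antidiagonal m, 1 / (((p.1 : ℝ) + 1) * ((p.2 : ℝ) + 1))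
      = (1 / ((p.1 : ℝ) + 1) + 1 / ((p.2 : ℝ) + 1)) / ((m : ℝ) + 2) := by
    intro p hp
    have hm : (p.1 : ℝ) + p.2 = m := by exact_mod_cast mem_antidiagonal.mp hp
    rw [← hm]
    field_simp
    ring
  have sum_inv_succ_fst : ∑ p ∈ antidiagonal m, 1 / ((p.1 : ℝ) + 1) = H (m + 1) := by
    rw [H_eq_sum_range, sum_antidiagonal_eq_sum_range_succ_mk]
  have sum_inv_succ_snd : ∑ p ∈ antidiagonal m, 1 / ((p.2 : ℝ) + 1) = H (m + 1) := by
    rw [← sum_inv_succ_fst, ← sum_antidiagonal_swap]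
    rfl
  rw [sum_congr rfl partial_fractions, ← sum_div, sum_add_distrib, sum_inv_succ_fst,
    sum_inv_succ_snd]
  ring

lemma sum_antidiagonal_H_div_succ (m : ℕ) :
    ∑ p ∈ antidiagonal m, H p.1 / ((p.2 : ℝ) + 1) = H (m + 1) ^ 2 - H2 (m + 1) := by
  induction m with
  | zero => simp [H, H2]
  | succ m ih =>
    have step : ∀ p ∈ antidiagonal m, H (p.1 + 1) / ((p.2 : ℝ) + 1)
        = H p.1 / ((p.2 : ℝ) + 1) + 1 / (((p.1 : ℝ) + 1) * ((p.2 : ℝ) + 1)) := by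
      intro p _
      rw [H_succ]
      field_simp
    rw [sum_antidiagonal_succ, H_zero, zero_div, zero_add, sum_congr rfl step, sum_add_distrib,
      ih, sum_antidiagonal_inv_succ_mul_inv_succ, H_succ (m + 1), H2_succ (m + 1)]
    push_cast
    field_simp
    ring

lemma sum_antidiagonal_H_mul_H_succ (m : ℕ) :
    ∑ p ∈ antidiagonal (m + 1), H p.1 * H p.2
      = ∑ p ∈ antidiagonal m, H p.1 * H p.2 + (H (m + 1) ^ 2 - H2 (m + 1)) := by
  have step : ∀ p ∈ antidiagonal m, H (p.1 + 1) * H p.2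
      = H p.1 * H p.2 + H p.2 / ((p.1 : ℝ) + 1) := by
    intro p _
    rw [H_succ]
    ring
  rw [sum_antidiagonal_succ, H_zero, zero_mul, zero_add, sum_congr rfl step, sum_add_distrib,
    ← sum_antidiagonal_H_div_succ m]
  congr 1
  exact sum_antidiagonal_swap (f := fun p => H p.1 / ((p.2 : ℝ) + 1))

lemma sum_antidiagonal_H_mul_H (n : ℕ) :
    ∑ p ∈ antidiagonal (n + 1), H p.1 * H p.2
      = ((n : ℝ) + 2) * (H (n + 1) ^ 2 - H2 (n + 1)) - 2 * ((n : ℝ) + 1) * (H (n + 1) - 1) := by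
  induction n with
  | zero => simp [sum_antidiagonal_succ, H, H2]
  | succ n ih =>
    rw [sum_antidiagonal_H_mul_H_succ, ih, H_succ (n + 1), H2_succ (n + 1)]
    push_cast
    field_simp
    ring

lemma sum_Icc_eq_sum_antidiagonal {M : Type*} [AddCommMonoid M] (f : ℕ → ℕ → M)
    (hf₁ : ∀ m, f 0 m = 0) (hf₂ : ∀ m, f m 0 = 0) (n : ℕ) :
    ∑ i ∈ Icc 1 n, f i (n + 1 - i) = ∑ p ∈ antidiagonal (n + 1), f p.1 p.2 := by
  rw [sum_antidiagonal_eq_sum_range_succ f]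
  refine sum_subset (fun i hi => ?_) (fun i hi hi' => ?_)
  · simp only [mem_Icc, mem_range] at hi ⊢
    omega
  · simp only [mem_Icc, mem_range, not_and_or, not_le] at hi hi'
    obtain rfl | rfl : i = 0 ∨ i = n + 1 := by omega
    · exact hf₁ _
    · simpa using hf₂ (n + 1)

theorem stmt7_general (n : ℕ) :
    ∑ i ∈ Icc 1 n, H i * H (n+1-i)
      = ((n:ℝ)+2)*((H (n+1))^2 - H2 (n+1)) - 2*((n:ℝ)+1)*(H (n+1) - 1) := by
  rw [sum_Icc_eq_sum_antidiagonal (fun i j => H i * H j) (by simp [H_zero]) (by simp [H_zero]),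
    sum_antidiagonal_H_mul_H]

theorem stmt7 (n : ℕ) (hn : 1 ≤ n) :
    ∑ i ∈ Icc 1 n, H i * H (n+1-i)
      = ((n:ℝ)+2)*((H (n+1))^2 - H2 (n+1)) - 2*((n:ℝ)+1)*(H (n+1) - 1) :=
  stmt7_general n
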